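/- The operator norm of the block matrix C + T = [[0, α·(V×)], [-β·(V×), 0]] equals max{α|V|, β|V|}, where α = (μ₀/(με₀))(1/c_Ω² − 1/c²) and β = (ε₀/(μ₀ε))(1/c_Ω² − 1/c²), assuming c_Ω ≤ c. -/

import Mathlib

/-! The block operator is the pair `(a • (V×) ∘ snd, b • (V×) ∘ fst)`, and precomposing with a
projection of `E × F` does not change an operator norm, so its norm is
`max (|a| ‖V×‖) (|b| ‖V×‖)`. Since `‖V × x‖ = ‖V‖ ‖x‖ sin ∠(V, x)`, with equality `‖V‖ ‖x‖` for
`x ⟂ V`, we get `‖V×‖ = ‖V‖`. Finally `0 < c_Ω ≤ c` makes `α` and `β` nonnegative. -/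

/-- The cross product with `V` as a continuous linear map on Euclidean `ℝ³`. -/
noncomputable def crossCLM (V : EuclideanSpace ℝ (Fin 3)) :
    EuclideanSpace ℝ (Fin 3) →L[ℝ] EuclideanSpace ℝ (Fin 3) :=
  LinearMap.toContinuousLinearMap
    { toFun := fun x => WithLp.toLp 2 (crossProduct V x)
      map_add' := fun x y => by simp
      map_smul' := fun c x => by simp }

/-- The block operator `[[0, a·(V×)], [b·(V×), 0]]` on `ℝ³ × ℝ³` (max of Euclidean norms). -/
noncomputable def offDiagCross (a b : ℝ) (V : EuclideanSpace ℝ (Fin 3)) :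
    (EuclideanSpace ℝ (Fin 3) × EuclideanSpace ℝ (Fin 3)) →L[ℝ]
      (EuclideanSpace ℝ (Fin 3) × EuclideanSpace ℝ (Fin 3)) :=
  ((a • crossCLM V).comp (ContinuousLinearMap.snd ℝ _ _)).prod
    ((b • crossCLM V).comp (ContinuousLinearMap.fst ℝ _ _))

open scoped RealInnerProductSpace

open InnerProductGeometry

namespace ContinuousLinearMap

variable {𝕜 E F G : Type*} [NontriviallyNormedField 𝕜]
  [SeminormedAddCommGroup E] [NormedSpace 𝕜 E] [SeminormedAddCommGroup F] [NormedSpace 𝕜 F]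
  [SeminormedAddCommGroup G] [NormedSpace 𝕜 G]

theorem opNorm_comp_fst (A : E →L[𝕜] G) : ‖A.comp (fst 𝕜 E F)‖ = ‖A‖ := by
  refine le_antisymm ((opNorm_comp_le _ _).trans (mul_le_of_le_one_right (norm_nonneg _)
    (norm_fst_le 𝕜 E F))) ?_
  calc ‖A‖ = ‖(A.comp (fst 𝕜 E F)).comp (inl 𝕜 E F)‖ := rfl
    _ ≤ ‖A.comp (fst 𝕜 E F)‖ * ‖inl 𝕜 E F‖ := opNorm_comp_le _ _
    _ ≤ ‖A.comp (fst 𝕜 E F)‖ := mul_le_of_le_one_right (norm_nonneg _) (norm_inl_le_one 𝕜 E F)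

theorem opNorm_comp_snd (A : F →L[𝕜] G) : ‖A.comp (snd 𝕜 E F)‖ = ‖A‖ := by
  refine le_antisymm ((opNorm_comp_le _ _).trans (mul_le_of_le_one_right (norm_nonneg _)
    (norm_snd_le 𝕜 E F))) ?_
  calc ‖A‖ = ‖(A.comp (snd 𝕜 E F)).comp (inr 𝕜 E F)‖ := rfl
    _ ≤ ‖A.comp (snd 𝕜 E F)‖ * ‖inr 𝕜 E F‖ := opNorm_comp_le _ _
    _ ≤ ‖A.comp (snd 𝕜 E F)‖ := mul_le_of_le_one_right (norm_nonneg _) (norm_inr_le_one 𝕜 E F)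

end ContinuousLinearMap

theorem exists_ne_zero_inner_eq_zero {E : Type*} [NormedAddCommGroup E] [InnerProductSpace ℝ E]
    [FiniteDimensional ℝ E] (h : 1 < Module.finrank ℝ E) (v : E) :
    ∃ x : E, x ≠ 0 ∧ ⟪v, x⟫ = 0 := by
  have hdim := (ℝ ∙ v).finrank_add_finrank_orthogonal
  have hne : (ℝ ∙ v)ᗮ ≠ ⊥ := by
    intro hbot
    rw [hbot, finrank_bot] at hdim
    have : Module.finrank ℝ (ℝ ∙ v) ≤ 1 := finrank_span_le_card ({v} : Set E)
    omega
  obtain ⟨x, hx, hx0⟩ := Submodule.exists_mem_ne_zero_of_ne_bot hne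
  exact ⟨x, hx0, Submodule.inner_right_of_mem_orthogonal (Submodule.mem_span_singleton_self v) hx⟩

theorem norm_crossCLM_apply (V x : EuclideanSpace ℝ (Fin 3)) :
    ‖crossCLM V x‖ = ‖V‖ * ‖x‖ * Real.sin (angle V x) :=
  norm_ofLp_crossProduct V x

theorem norm_crossCLM (V : EuclideanSpace ℝ (Fin 3)) : ‖crossCLM V‖ = ‖V‖ := by
  refine le_antisymm (ContinuousLinearMap.opNorm_le_bound _ (norm_nonneg V) fun x => ?_) ?_
  · rw [norm_crossCLM_apply]
    exact mul_le_of_le_one_right (by positivity) (Real.sin_le_one _)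
  · obtain ⟨x, hx0, hVx⟩ := exists_ne_zero_inner_eq_zero (by simp) V
    have hsin : Real.sin (angle V x) = 1 := by
      rw [(inner_eq_zero_iff_angle_eq_pi_div_two V x).1 hVx, Real.sin_pi_div_two]
    refine le_of_mul_le_mul_right ?_ (norm_pos_iff.2 hx0)
    simpa [norm_crossCLM_apply, hsin] using (crossCLM V).le_opNorm x

theorem norm_offDiagCross (a b : ℝ) (V : EuclideanSpace ℝ (Fin 3)) :
    ‖offDiagCross a b V‖ = max (|a| * ‖V‖) (|b| * ‖V‖) := by
  simp only [offDiagCross, ContinuousLinearMap.opNorm_prod, Prod.norm_mk,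
    ContinuousLinearMap.opNorm_comp_fst, ContinuousLinearMap.opNorm_comp_snd, norm_smul,
    norm_crossCLM, Real.norm_eq_abs]

theorem opNorm_C_plus_T_general (ε μ ε₀ μ₀ c cΩ α β : ℝ)
    (hε : 0 < ε) (hμ : 0 < μ) (hε₀ : 0 < ε₀) (hμ₀ : 0 < μ₀)
    (hcΩ : cΩ = 1 / Real.sqrt (ε * μ))
    (hle : cΩ ≤ c)
    (hα : α = μ₀ / (μ * ε₀) * (1 / cΩ ^ 2 - 1 / c ^ 2))
    (hβ : β = ε₀ / (μ₀ * ε) * (1 / cΩ ^ 2 - 1 / c ^ 2))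
    (V : EuclideanSpace ℝ (Fin 3)) :
    ‖offDiagCross α (-β) V‖ = max (α * ‖V‖) (β * ‖V‖) := by
  have hcΩ_pos : 0 < cΩ := by rw [hcΩ]; positivity
  have hgap : 0 ≤ 1 / cΩ ^ 2 - 1 / c ^ 2 :=
    sub_nonneg.2 (one_div_le_one_div_of_le (by positivity) (pow_le_pow_left₀ hcΩ_pos.le hle 2))
  have hα_nonneg : 0 ≤ α := hα ▸ mul_nonneg (by positivity) hgap
  have hβ_nonneg : 0 ≤ β := hβ ▸ mul_nonneg (by positivity) hgap
  rw [norm_offDiagCross, abs_of_nonneg hα_nonneg, abs_neg, abs_of_nonneg hβ_nonneg]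

/-- The operator norm of `C + T = [[0, α·(V×)], [-β·(V×), 0]]` equals
`max {α|V|, β|V|}`, where `α = (μ₀/(με₀))(1/c_Ω² − 1/c²)` and
`β = (ε₀/(μ₀ε))(1/c_Ω² − 1/c²)`, assuming `c_Ω ≤ c`. -/
theorem opNorm_C_plus_T (ε μ ε₀ μ₀ c cΩ α β : ℝ)
    (hε : 0 < ε) (hμ : 0 < μ) (hε₀ : 0 < ε₀) (hμ₀ : 0 < μ₀)
    (hc : c = 1 / Real.sqrt (ε₀ * μ₀)) (hcΩ : cΩ = 1 / Real.sqrt (ε * μ))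
    (hle : cΩ ≤ c)
    (hα : α = μ₀ / (μ * ε₀) * (1 / cΩ ^ 2 - 1 / c ^ 2))
    (hβ : β = ε₀ / (μ₀ * ε) * (1 / cΩ ^ 2 - 1 / c ^ 2))
    (V : EuclideanSpace ℝ (Fin 3)) :
    ‖offDiagCross α (-β) V‖ = max (α * ‖V‖) (β * ‖V‖) :=
  opNorm_C_plus_T_general ε μ ε₀ μ₀ c cΩ α β hε hμ hε₀ hμ₀ hcΩ hle hα hβ V
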